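/- arXiv:1510.04588 — 2 statements merged into one kernel-verified Lean document; each statement's English description precedes it below -/
import Mathlib

section
/- For any real numbers a, b and any c, θ > 0, one has c·|a|·|1_{b ≥ 0} − 1_{a ≥ 0}| ≤ c·|b − a|·1_{|b−a| ≥ θ} + c·θ·1_{|a| < θ}. -/
theorem stmt_0 (a b c θ : ℝ) (hc : 0 < c) (hθ : 0 < θ) :
    c * |a| * |(if 0 ≤ b then (1:ℝ) else 0) - (if 0 ≤ a then (1:ℝ) else 0)| ≤
      c * |b - a| * (if θ ≤ |b - a| then (1:ℝ) else 0) +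
        c * θ * (if |a| < θ then (1:ℝ) else 0) := by
  have hab : |a| ≤ |b - a| ∨
      c * |a| * |(if 0 ≤ b then (1:ℝ) else 0) - (if 0 ≤ a then (1:ℝ) else 0)| = 0 := by
    by_cases hA : 0 ≤ a <;> by_cases hB : 0 ≤ b <;> simp [hA, hB]
    · left
      rw [abs_of_nonneg hA]
      cases abs_cases (b - a) with
      | inl h => push_neg at hB; linarith [h.1, h.2]
      | inr h => linarith [h.1, h.2]
    · left
      push_neg at hA
      rw [abs_of_neg hA]
      cases abs_cases (b - a) with
      | inl h => linarith [h.1, h.2]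
      | inr h => linarith [h.1, h.2]
  have h1 : (0:ℝ) ≤ c * |b - a| * (if θ ≤ |b - a| then (1:ℝ) else 0) := by
    positivity
  have h2 : (0:ℝ) ≤ c * θ * (if |a| < θ then (1:ℝ) else 0) := by positivity
  have hI : |(if 0 ≤ b then (1:ℝ) else 0) - (if 0 ≤ a then (1:ℝ) else 0)| ≤ 1 := by
    split_ifs <;> norm_num
  rcases hab with hab | hz
  · by_cases ht : |a| < θ
    · have : c * |a| * |(if 0 ≤ b then (1:ℝ) else 0) - (if 0 ≤ a then (1:ℝ) else 0)| ≤
          c * θ := by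
        calc c * |a| * |(if 0 ≤ b then (1:ℝ) else 0) - (if 0 ≤ a then (1:ℝ) else 0)|
            ≤ c * |a| * 1 := by
              apply mul_le_mul_of_nonneg_left hI; positivity
          _ ≤ c * θ := by nlinarith [abs_nonneg a]
      simp only [ht, if_pos]
      linarith
    · push_neg at ht
      have ht2 : θ ≤ |b - a| := le_trans ht hab
      simp only [ht2, if_pos]
      have : c * |a| * |(if 0 ≤ b then (1:ℝ) else 0) - (if 0 ≤ a then (1:ℝ) else 0)| ≤
          c * |b - a| := by
        calc c * |a| * |(if 0 ≤ b then (1:ℝ) else 0) - (if 0 ≤ a then (1:ℝ) else 0)|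
            ≤ c * |a| * 1 := by
              apply mul_le_mul_of_nonneg_left hI; positivity
          _ ≤ c * |b - a| := by nlinarith
      linarith
  · rw [hz]; linarith
end

section
/- Let V_0, …, V_d be smooth vector fields on ℝ^N satisfying the (UFG) condition: there exist ℓ_0 ≥ 1 and smooth bounded functions φ_{α,β} such that V_{[α]} = Σ_{β ∈ A*_{≤ℓ_0}} φ_{α,β} V_{[β]} for all multi-indices α ∈ A*. Suppose π : ℝ^N → ℝ^M is a linear projection and Ṽ_0, …, Ṽ_d are smooth vector fields on ℝ^M that are π-related to V_0, …, V_d, i.e., V_i(f ∘ π) = (Ṽ_i f) ∘ π for all smooth f on ℝ^M. Suppose moreover there is a linear section j : ℝ^M → ℝ^N with π ∘ j = id. Then the system {Ṽ_0, …, Ṽ_d} also satisfies the (UFG) condition, with the same ℓ_0 and coefficient functions φ_{α,β} ∘ j. -/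
open Finset

/-- Lie bracket of two vector fields, `[V,W] = DW·V - DV·W`. -/
noncomputable def lieBracketVF {N : ℕ} (V W : (Fin N → ℝ) → (Fin N → ℝ)) :
    (Fin N → ℝ) → (Fin N → ℝ) :=
  fun x => fderiv ℝ W x (V x) - fderiv ℝ V x (W x)

/-- Iterated bracket `V_{[α]}` for the multi-index `α = (i, l)` (the word `i :: l`,
letters appended on the right): `V_{[i]} = V i`, `V_{[α*j]} = [V_{[α]}, V j]`. -/
noncomputable def iterBracket {N d : ℕ} (V : Fin (d + 1) → (Fin N → ℝ) → (Fin N → ℝ)) :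
    Fin (d + 1) × List (Fin (d + 1)) → (Fin N → ℝ) → (Fin N → ℝ) :=
  fun α => α.2.foldl (fun A j => lieBracketVF A (V j)) (V α.1)

/-- `‖α‖ = |α| + #{i : αⁱ = 0}` for `α = (i, l)`. -/
def idxNorm {d : ℕ} (α : Fin (d + 1) × List (Fin (d + 1)) ) : ℕ :=
  (1 + α.2.length) + ((α.1 :: α.2).count (0 : Fin (d + 1)))


lemma lieBracketVF_contDiff {N : ℕ} {V W : (Fin N → ℝ) → (Fin N → ℝ)}
    (hV : ContDiff ℝ (⊤ : ℕ∞) V) (hW : ContDiff ℝ (⊤ : ℕ∞) W) : ContDiff ℝ (⊤ : ℕ∞) (lieBracketVF V W) := by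
  exact ((hW.fderiv_right (by simp)).clm_apply hV).sub ((hV.fderiv_right (by simp)).clm_apply hW)

lemma rel_bracket {N M : ℕ} (π : (Fin N → ℝ) →ₗ[ℝ] (Fin M → ℝ))
    {V W : (Fin N → ℝ) → (Fin N → ℝ)} {Vt Wt : (Fin M → ℝ) → (Fin M → ℝ)}
    (hV : ContDiff ℝ (⊤ : ℕ∞) V) (hW : ContDiff ℝ (⊤ : ℕ∞) W)
    (hVt : ContDiff ℝ (⊤ : ℕ∞) Vt) (hWt : ContDiff ℝ (⊤ : ℕ∞) Wt)
    (hrV : ∀ x, π (V x) = Vt (π x)) (hrW : ∀ x, π (W x) = Wt (π x)) :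
    ∀ x, π (lieBracketVF V W x) = lieBracketVF Vt Wt (π x) := by
  intro x
  set πc := LinearMap.toContinuousLinearMap π with hπc
  have hπ : ∀ z, πc z = π z := fun z => rfl
  have key : ∀ (A : (Fin N → ℝ) → (Fin N → ℝ)) (At : (Fin M → ℝ) → (Fin M → ℝ)),
      ContDiff ℝ (⊤ : ℕ∞) A → ContDiff ℝ (⊤ : ℕ∞) At → (∀ z, π (A z) = At (π z)) →
      πc.comp (fderiv ℝ A x) = (fderiv ℝ At (π x)).comp πc := by
    intro A At hA hAt hr
    have h1 : HasFDerivAt (fun z => πc (A z)) (πc.comp (fderiv ℝ A x)) x :=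
      πc.hasFDerivAt.comp x (hA.differentiable (by simp) x).hasFDerivAt
    have h2 : HasFDerivAt (fun z => At (πc z)) ((fderiv ℝ At (π x)).comp πc) x :=
      ((hAt.differentiable (by simp) (π x)).hasFDerivAt).comp x πc.hasFDerivAt
    have heq : (fun z => πc (A z)) = fun z => At (πc z) := by
      funext z; rw [hπ, hr, hπ]
    rw [heq] at h1
    exact h1.unique h2
  have kW := key W Wt hW hWt hrW
  have kV := key V Vt hV hVt hrV
  have e1 : π (fderiv ℝ W x (V x)) = fderiv ℝ Wt (π x) (Vt (π x)) := by
    have := congrArg (fun L : (Fin N → ℝ) →L[ℝ] (Fin M → ℝ) => L (V x)) kW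
    simpa [hπ, hrV x] using this
  have e2 : π (fderiv ℝ V x (W x)) = fderiv ℝ Vt (π x) (Wt (π x)) := by
    have := congrArg (fun L : (Fin N → ℝ) →L[ℝ] (Fin M → ℝ) => L (W x)) kV
    simpa [hπ, hrW x] using this
  simp only [lieBracketVF, map_sub, e1, e2]

lemma foldl_rel {N M d : ℕ} (π : (Fin N → ℝ) →ₗ[ℝ] (Fin M → ℝ))
    (V : Fin (d + 1) → (Fin N → ℝ) → (Fin N → ℝ)) (hV : ∀ i, ContDiff ℝ (⊤ : ℕ∞) (V i))
    (Vt : Fin (d + 1) → (Fin M → ℝ) → (Fin M → ℝ)) (hVt : ∀ i, ContDiff ℝ (⊤ : ℕ∞) (Vt i))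
    (hrel : ∀ i x, π (V i x) = Vt i (π x)) :
    ∀ (l : List (Fin (d + 1))) (A : (Fin N → ℝ) → (Fin N → ℝ))
      (At : (Fin M → ℝ) → (Fin M → ℝ)), ContDiff ℝ (⊤ : ℕ∞) A → ContDiff ℝ (⊤ : ℕ∞) At →
      (∀ x, π (A x) = At (π x)) →
      ContDiff ℝ (⊤ : ℕ∞) (l.foldl (fun B j => lieBracketVF B (V j)) A) ∧
      ContDiff ℝ (⊤ : ℕ∞) (l.foldl (fun B j => lieBracketVF B (Vt j)) At) ∧
      ∀ x, π (l.foldl (fun B j => lieBracketVF B (V j)) A x) =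
        l.foldl (fun B j => lieBracketVF B (Vt j)) At (π x) := by
  intro l
  induction l with
  | nil => intro A At hA hAt hr; exact ⟨hA, hAt, hr⟩
  | cons i t ih =>
    intro A At hA hAt hr
    simp only [List.foldl_cons]
    exact ih _ _ (lieBracketVF_contDiff hA (hV i)) (lieBracketVF_contDiff hAt (hVt i))
      (rel_bracket π hA (hV i) hAt (hVt i) hr (hrel i))

theorem stmt_9 {N M d : ℕ} (ℓ₀ : ℕ) (hℓ₀ : 1 ≤ ℓ₀)
    (V : Fin (d + 1) → (Fin N → ℝ) → (Fin N → ℝ))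
    (hV : ∀ i, ContDiff ℝ (⊤ : ℕ∞) (V i))
    (S : Finset (Fin (d + 1) × List (Fin (d + 1))))
    (hS : ∀ β, β ∈ S ↔ (idxNorm β ≤ ℓ₀ ∧ β ≠ ((0 : Fin (d + 1)), ([] : List (Fin (d + 1))))))
    (φ : (Fin (d + 1) × List (Fin (d + 1))) → (Fin (d + 1) × List (Fin (d + 1))) →
      (Fin N → ℝ) → ℝ)
    (hφsmooth : ∀ α β, ContDiff ℝ (⊤ : ℕ∞) (φ α β))
    (hφbdd : ∀ α β, ∃ C : ℝ, ∀ x, |φ α β x| ≤ C)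
    (hUFG : ∀ α, α ≠ ((0 : Fin (d + 1)), ([] : List (Fin (d + 1)))) →
      ∀ x, iterBracket V α x = ∑ β ∈ S, φ α β x • iterBracket V β x)
    (π : (Fin N → ℝ) →ₗ[ℝ] (Fin M → ℝ))
    (Vt : Fin (d + 1) → (Fin M → ℝ) → (Fin M → ℝ))
    (hVt : ∀ i, ContDiff ℝ (⊤ : ℕ∞) (Vt i))
    (hrel : ∀ i x, π (V i x) = Vt i (π x))
    (j : (Fin M → ℝ) →ₗ[ℝ] (Fin N → ℝ)) (hj : ∀ y, π (j y) = y) :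
    ∀ α, α ≠ ((0 : Fin (d + 1)), ([] : List (Fin (d + 1)))) →
      ∀ y, iterBracket Vt α y = ∑ β ∈ S, φ α β (j y) • iterBracket Vt β y := by
  have fr := foldl_rel π V hV Vt hVt hrel
  have hib : ∀ α x, π (iterBracket V α x) = iterBracket Vt α (π x) := by
    intro α x
    exact (fr α.2 (V α.1) (Vt α.1) (hV α.1) (hVt α.1) (hrel α.1)).2.2 x
  intro α hα y
  have h := congrArg π (hUFG α hα (j y))
  rw [hib, hj, map_sum] at h
  rw [h]
  refine Finset.sum_congr rfl fun β _ => ?_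
  rw [map_smul, hib, hj]
end
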